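/- The quantum correction term satisfies div(ρ ∇² log ρ) = 2ρ ∇(Δ√ρ/√ρ) for any positive smooth function ρ on ℝ³, where ∇² log ρ is the Hessian of log ρ and div acts row-wise on the matrix ρ ∇² log ρ. -/

import Mathlib

open MeasureTheory Real

noncomputable section

/-- Partial derivative in direction `i`. -/
def pd (i : Fin 3) (f : EuclideanSpace ℝ (Fin 3) → ℝ) : EuclideanSpace ℝ (Fin 3) → ℝ :=
  fun x => fderiv ℝ f x (EuclideanSpace.single i 1)

/-- The Laplacian on `ℝ³`. -/
def lap (f : EuclideanSpace ℝ (Fin 3) → ℝ) : EuclideanSpace ℝ (Fin 3) → ℝ :=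
  fun x => ∑ i, pd i (pd i f) x

abbrev E3 := EuclideanSpace ℝ (Fin 3)

lemma pd_smooth {f : E3 → ℝ} (hf : ContDiff ℝ (⊤ : ℕ∞) f) (i : Fin 3) : ContDiff ℝ (⊤ : ℕ∞) (pd i f) := by
  have h : ContDiff ℝ (⊤ : ℕ∞) (fderiv ℝ f) := hf.fderiv_right (by simp)
  exact h.clm_apply contDiff_const

lemma pd_comm {f : E3 → ℝ} (hf : ContDiff ℝ (⊤ : ℕ∞) f) (i j : Fin 3) (x : E3) :
    pd i (pd j f) x = pd j (pd i f) x := by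
  have hd : Differentiable ℝ (fderiv ℝ f) :=
    (hf.fderiv_right (m := 1) (WithTop.coe_le_coe.mpr le_top)).differentiable one_ne_zero
  have key : ∀ a b : Fin 3, pd a (pd b f) x
      = fderiv ℝ (fderiv ℝ f) x (EuclideanSpace.single a 1) (EuclideanSpace.single b 1) := by
    intro a b
    show fderiv ℝ (fun y => (fderiv ℝ f y) (EuclideanSpace.single b 1)) x _ = _
    rw [fderiv_clm_apply (hd x) (differentiableAt_const _)]
    simp
  rw [key, key]
  exact (hf.contDiffAt.isSymmSndFDerivAt (by simp; exact WithTop.coe_le_coe.mpr le_top)) _ _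

lemma pd_mul {f g : E3 → ℝ} {x : E3} (hf : DifferentiableAt ℝ f x) (hg : DifferentiableAt ℝ g x)
    (i : Fin 3) : pd i (fun y => f y * g y) x = f x * pd i g x + g x * pd i f x := by
  unfold pd; rw [fderiv_fun_mul hf hg]; simp

lemma pd_inv {g : E3 → ℝ} {x : E3} (hg : DifferentiableAt ℝ g x) (hgx : g x ≠ 0) (i : Fin 3) :
    pd i (fun y => (g y)⁻¹) x = -pd i g x / g x ^ 2 := by
  unfold pd
  have h : HasFDerivAt (fun y => (g y)⁻¹) ((-((g x) ^ 2)⁻¹) • fderiv ℝ g x) x :=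
    (hasDerivAt_inv hgx).comp_hasFDerivAt x hg.hasFDerivAt
  rw [h.fderiv]; simp; ring

lemma diffAt_div {f g : E3 → ℝ} {x : E3} (hf : DifferentiableAt ℝ f x)
    (hg : DifferentiableAt ℝ g x) (hgx : g x ≠ 0) :
    DifferentiableAt ℝ (fun y => f y / g y) x := by
  simp only [div_eq_mul_inv]; exact hf.mul (hg.inv hgx)

lemma pd_div {f g : E3 → ℝ} {x : E3} (hf : DifferentiableAt ℝ f x) (hg : DifferentiableAt ℝ g x)
    (hgx : g x ≠ 0) (i : Fin 3) :
    pd i (fun y => f y / g y) x = (pd i f x * g x - f x * pd i g x) / g x ^ 2 := by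
  have h : (fun y => f y / g y) = fun y => f y * (g y)⁻¹ := by
    funext y; rw [div_eq_mul_inv]
  rw [h, pd_mul (g := fun y => (g y)⁻¹) hf (hg.inv hgx), pd_inv hg hgx]
  field_simp; ring

lemma pd_sub {f g : E3 → ℝ} {x : E3} (hf : DifferentiableAt ℝ f x) (hg : DifferentiableAt ℝ g x)
    (i : Fin 3) : pd i (fun y => f y - g y) x = pd i f x - pd i g x := by
  unfold pd; rw [fderiv_fun_sub hf hg]; simp

lemma pd_sum {f : Fin 3 → E3 → ℝ} {x : E3} (hf : ∀ j, DifferentiableAt ℝ (f j) x)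
    (i : Fin 3) : pd i (fun y => ∑ j, f j y) x = ∑ j, pd i (f j) x := by
  unfold pd
  rw [fderiv_fun_sum (fun j _ => hf j)]; simp

lemma pd_const_mul {g : E3 → ℝ} {x : E3} (c : ℝ) (hg : DifferentiableAt ℝ g x) (i : Fin 3) :
    pd i (fun y => c * g y) x = c * pd i g x := by
  rw [pd_mul (differentiableAt_const c) hg]
  have : pd i (fun _ : E3 => c) x = 0 := by
    unfold pd; rw [fderiv_fun_const]; simp
  rw [this]; ring

lemma pd_sq {g : E3 → ℝ} {x : E3} (hg : DifferentiableAt ℝ g x) (i : Fin 3) :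
    pd i (fun y => g y ^ 2) x = 2 * g x * pd i g x := by
  have h : (fun y => g y ^ 2) = fun y => g y * g y := by funext y; ring
  rw [h, pd_mul hg hg]; ring

lemma pd_log {ρ : E3 → ℝ} {x : E3} (hρ : DifferentiableAt ℝ ρ x) (hx : ρ x ≠ 0) (i : Fin 3) :
    pd i (fun z => Real.log (ρ z)) x = pd i ρ x / ρ x := by
  unfold pd
  have h : HasFDerivAt (fun z => Real.log (ρ z)) ((ρ x)⁻¹ • fderiv ℝ ρ x) x :=
    (Real.hasDerivAt_log hx).comp_hasFDerivAt x hρ.hasFDerivAt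
  rw [h.fderiv]; simp; ring

lemma pd_sqrt {ρ : E3 → ℝ} {x : E3} (hρ : DifferentiableAt ℝ ρ x) (hx : ρ x ≠ 0) (i : Fin 3) :
    pd i (fun z => Real.sqrt (ρ z)) x = pd i ρ x / (2 * Real.sqrt (ρ x)) := by
  unfold pd
  have h : HasFDerivAt (fun z => Real.sqrt (ρ z)) ((1 / (2 * Real.sqrt (ρ x))) • fderiv ℝ ρ x) x :=
    (Real.hasDerivAt_sqrt hx).comp_hasFDerivAt x hρ.hasFDerivAt
  rw [h.fderiv]; simp; ring

/-- for positive smooth `ρ` on `ℝ³`, rowwise,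
`div(ρ ∇² log ρ) = 2ρ ∇(Δ√ρ/√ρ)`, where `(div M)ᵢ = Σⱼ ∂ⱼ Mᵢⱼ` and
`Mᵢⱼ = ρ ∂ᵢ∂ⱼ(log ρ)`. -/
theorem quantum_correction_div_form (ρ : EuclideanSpace ℝ (Fin 3) → ℝ)
    (hρ : ContDiff ℝ (⊤ : ℕ∞) ρ) (hpos : ∀ x, 0 < ρ x) (i : Fin 3) (x : EuclideanSpace ℝ (Fin 3)) :
    (∑ j, pd j (fun y => ρ y * pd j (pd i (fun z => Real.log (ρ z))) y) x) =
      2 * ρ x * pd i (fun y => lap (fun z => Real.sqrt (ρ z)) y / Real.sqrt (ρ y)) x := by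
  have hne : ∀ y, ρ y ≠ 0 := fun y => (hpos y).ne'
  have dρ : ∀ y, DifferentiableAt ℝ ρ y := fun y => (hρ.differentiable (by simp)).differentiableAt
  have hP : ∀ k, ContDiff ℝ (⊤ : ℕ∞) (pd k ρ) := fun k => pd_smooth hρ k
  have dP : ∀ k y, DifferentiableAt ℝ (pd k ρ) y :=
    fun k y => ((hP k).differentiable (by simp)).differentiableAt
  have hP2 : ∀ k l, ContDiff ℝ (⊤ : ℕ∞) (pd l (pd k ρ)) := fun k l => pd_smooth (hP k) l
  have dP2 : ∀ k l y, DifferentiableAt ℝ (pd l (pd k ρ)) y :=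
    fun k l y => ((hP2 k l).differentiable (by simp)).differentiableAt
  -- the log-Hessian in closed form
  have hlog1 : pd i (fun z => Real.log (ρ z)) = fun y => pd i ρ y / ρ y := by
    funext y; exact pd_log (dρ y) (hne y) i
  have hH : ∀ j : Fin 3, pd j (pd i (fun z => Real.log (ρ z))) = fun y =>
      (pd j (pd i ρ) y * ρ y - pd i ρ y * pd j ρ y) / ρ y ^ 2 := by
    intro j; rw [hlog1]; funext y
    exact pd_div (dP i y) (dρ y) (hne y) j
  -- the quotient Δ√ρ/√ρ in closed form
  have dS : ∀ y, DifferentiableAt ℝ (fun z => Real.sqrt (ρ z)) y := by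
    intro y
    exact (dρ y).sqrt (hne y)
  have hS1 : ∀ j : Fin 3, pd j (fun z => Real.sqrt (ρ z)) =
      fun y => pd j ρ y / (2 * Real.sqrt (ρ y)) := by
    intro j; funext y; exact pd_sqrt (dρ y) (hne y) j
  have hG : (fun y => lap (fun z => Real.sqrt (ρ z)) y / Real.sqrt (ρ y)) =
      fun y => ∑ j, (pd j (pd j ρ) y / (2 * ρ y) - pd j ρ y ^ 2 / (4 * ρ y ^ 2)) := by
    funext y
    have hs : Real.sqrt (ρ y) ≠ 0 := (Real.sqrt_pos.mpr (hpos y)).ne'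
    have hs2 : Real.sqrt (ρ y) ^ 2 = ρ y := Real.sq_sqrt (hpos y).le
    show (∑ j, pd j (pd j fun z => Real.sqrt (ρ z)) y) / Real.sqrt (ρ y) = _
    rw [Finset.sum_div]
    refine Finset.sum_congr rfl fun j _ => ?_
    have d2S : DifferentiableAt ℝ (fun z => 2 * Real.sqrt (ρ z)) y := (dS y).const_mul 2
    have h2ne : 2 * Real.sqrt (ρ y) ≠ 0 := by positivity
    rw [hS1 j, pd_div (dP j y) d2S h2ne j, pd_const_mul 2 (dS y) j, pd_sqrt (dρ y) (hne y) j]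
    rw [← hs2]
    field_simp
    rw [Real.sqrt_sq (Real.sqrt_nonneg (ρ y))]
    ring
  rw [hG]
  -- pull the sum out on the right
  have dF : ∀ j y, DifferentiableAt ℝ
      (fun y => pd j (pd j ρ) y / (2 * ρ y) - pd j ρ y ^ 2 / (4 * ρ y ^ 2)) y := by
    intro j y
    have h1 : (2 : ℝ) * ρ y ≠ 0 := by have := hpos y; positivity
    have h2 : (4 : ℝ) * ρ y ^ 2 ≠ 0 := by have := hpos y; positivity
    have a1 : DifferentiableAt ℝ (fun y => pd j (pd j ρ) y / (2 * ρ y)) y :=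
      diffAt_div (dP2 j j y) ((dρ y).const_mul 2) h1
    have a2 : DifferentiableAt ℝ (fun y => pd j ρ y ^ 2 / (4 * ρ y ^ 2)) y := by
      have b1 : DifferentiableAt ℝ (fun y => pd j ρ y ^ 2) y := (dP j y).pow 2
      have b2 : DifferentiableAt ℝ (fun y : E3 => 4 * ρ y ^ 2) y := ((dρ y).pow 2).const_mul 4
      exact diffAt_div b1 b2 h2
    exact a1.sub a2
  rw [pd_sum (fun j => dF j x) i, Finset.mul_sum]
  refine Finset.sum_congr rfl fun j _ => ?_
  -- LEFT SIDE
  simp only [hH j]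
  have dNum : ∀ y, DifferentiableAt ℝ
      (fun y => pd j (pd i ρ) y * ρ y - pd i ρ y * pd j ρ y) y :=
    fun y => ((dP2 i j y).mul (dρ y)).sub ((dP i y).mul (dP j y))
  have dρsq : ∀ y, DifferentiableAt ℝ (fun y => ρ y ^ 2) y := fun y => (dρ y).pow 2
  have hρsqne : ρ x ^ 2 ≠ 0 := pow_ne_zero 2 (hne x)
  have dHq : DifferentiableAt ℝ
      (fun y => (pd j (pd i ρ) y * ρ y - pd i ρ y * pd j ρ y) / ρ y ^ 2) x :=
    diffAt_div (dNum x) (dρsq x) hρsqne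
  rw [pd_mul (dρ x) dHq j, pd_div (dNum x) (dρsq x) hρsqne j,
    pd_sub (f := fun y => pd j (pd i ρ) y * ρ y) (g := fun y => pd i ρ y * pd j ρ y)
      ((dP2 i j x).mul (dρ x)) ((dP i x).mul (dP j x)) j,
    pd_mul (dP2 i j x) (dρ x) j, pd_mul (dP i x) (dP j x) j, pd_sq (dρ x) j]
  -- RIGHT SIDE
  have h1 : (2 : ℝ) * ρ x ≠ 0 := by have := hpos x; positivity
  have h2 : (4 : ℝ) * ρ x ^ 2 ≠ 0 := by have := hpos x; positivity
  have a1 : DifferentiableAt ℝ (fun y => pd j (pd j ρ) y / (2 * ρ y)) x :=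
    diffAt_div (dP2 j j x) ((dρ x).const_mul 2) h1
  have b1 : DifferentiableAt ℝ (fun y => pd j ρ y ^ 2) x := (dP j x).pow 2
  have b2 : DifferentiableAt ℝ (fun y : E3 => 4 * ρ y ^ 2) x := ((dρ x).pow 2).const_mul 4
  have a2 : DifferentiableAt ℝ (fun y => pd j ρ y ^ 2 / (4 * ρ y ^ 2)) x := diffAt_div b1 b2 h2
  rw [pd_sub a1 a2 i,
    pd_div (dP2 j j x) ((dρ x).const_mul 2) h1 i,
    pd_div b1 b2 h2 i,
    pd_const_mul 2 (dρ x) i, pd_const_mul 4 (dρsq x) i,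
    pd_sq (dP j x) i, pd_sq (dρ x) i]
  -- symmetry of derivatives
  have hswap : pd i (pd j ρ) = pd j (pd i ρ) := funext (pd_comm hρ i j)
  have hsym3 : pd i (pd j (pd j ρ)) x = pd j (pd j (pd i ρ)) x := by
    rw [pd_comm (hP j) i j x, hswap]
  rw [hsym3]
  have hsym1 : pd i (pd j ρ) x = pd j (pd i ρ) x := pd_comm hρ i j x
  rw [hsym1]
  field_simp
  ring

end
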